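/- arXiv:1601.03712 — 2 statements merged into one kernel-verified Lean document; each statement's English description precedes it below -/
import Mathlib

section
/- For any two positive semidefinite Hermitian matrices A and B of the same size, ‖A − B‖ ≤ max{‖A‖, ‖B‖}, where ‖·‖ is the operator norm. -/
/-! Positive semidefinite matrices are the nonnegative elements of the C⋆-algebra of matrices with
the L2 operator norm. There, `0 ≤ a, b` gives `-‖b‖ ≤ -b ≤ a - b ≤ a ≤ ‖a‖`, and a selfadjoint
element squeezed between `-r` and `r` has norm at most `r`, because `‖x‖` or `-‖x‖` lies in its
spectrum. -/

open scoped ComplexOrder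
/-- Operator (spectral) norm of a complex matrix. -/
noncomputable def opNorm {n : Type*} [Fintype n] [DecidableEq n]
    (A : Matrix n n ℂ) : ℝ :=
  ‖LinearMap.toContinuousLinearMap (Matrix.toEuclideanLin A)‖

namespace CStarAlgebra

variable {A : Type*} [CStarAlgebra A] [PartialOrder A] [StarOrderedRing A]

lemma norm_le_of_le_algebraMap_of_neg_le {x : A} (hx : IsSelfAdjoint x) {r : ℝ} (hr : 0 ≤ r)
    (hle : x ≤ algebraMap ℝ A r) (hneg : -x ≤ algebraMap ℝ A r) : ‖x‖ ≤ r := by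
  obtain _ | _ := subsingleton_or_nontrivial A
  · simpa [Subsingleton.elim x 0] using hr
  have hge : algebraMap ℝ A (-r) ≤ x := by rwa [map_neg, neg_le]
  rcases norm_or_neg_norm_mem_spectrum hx with hmem | hmem
  · exact (le_algebraMap_iff_spectrum_le hx).mp hle _ hmem
  · linarith [(algebraMap_le_iff_le_spectrum hx).mp hge _ hmem]

lemma sub_le_algebraMap_norm_of_nonneg {a b : A} (ha : 0 ≤ a) (hb : 0 ≤ b) :
    a - b ≤ algebraMap ℝ A ‖a‖ :=
  (sub_le_self a hb).trans (IsSelfAdjoint.of_nonneg ha).le_algebraMap_norm_self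

lemma norm_sub_le_max_of_nonneg {a b : A} (ha : 0 ≤ a) (hb : 0 ≤ b) :
    ‖a - b‖ ≤ max ‖a‖ ‖b‖ := by
  refine norm_le_of_le_algebraMap_of_neg_le (.sub (.of_nonneg ha) (.of_nonneg hb))
    (le_max_of_le_left (norm_nonneg a)) ?_ ?_
  · exact (sub_le_algebraMap_norm_of_nonneg ha hb).trans (algebraMap_mono A (le_max_left _ _))
  · rw [neg_sub]
    exact (sub_le_algebraMap_norm_of_nonneg hb ha).trans (algebraMap_mono A (le_max_right _ _))

end CStarAlgebra

/-- For positive semidefinite Hermitian matrices `A` and `B`,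
`‖A − B‖ ≤ max (‖A‖, ‖B‖)` in operator norm. -/
theorem opNorm_sub_le_max_of_posSemidef {n : ℕ}
    {A B : Matrix (Fin n) (Fin n) ℂ}
    (hA : A.PosSemidef) (hB : B.PosSemidef) :
    opNorm (A - B) ≤ max (opNorm A) (opNorm B) := by
  -- `opNorm` is definitionally the norm of the C⋆-algebra `Matrix.instCStarAlgebra`.
  open Matrix.Norms.L2Operator MatrixOrder in
  exact CStarAlgebra.norm_sub_le_max_of_nonneg hA.nonneg hB.nonneg
end

section
/- For M ≥ 2, the second derivative at 0 of the squared Fejér kernel K_M(τ) = [sin(πMτ)/(M sin(πτ))]⁴ equals −4π²(M²−1)/3. -/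
/-!
For `sin (π τ) ≠ 0` one has `sin (π M τ) = sin (π τ) ∑_{k<M} cos ((2k+1-M) π τ)`, so near `0`
the kernel is `g⁴` for the cosine polynomial `g τ = M⁻¹ ∑_{k<M} cos ((2k+1-M) π τ)`.
Since `g 0 = 1` and `g' 0 = 0`, `K_M'' 0 = 4 g'' 0 = -4 π² M⁻¹ ∑_{k<M} (2k+1-M)² = -4π²(M²-1)/3`.
-/

open Real

/-- The squared Fejér kernel `K_M(τ) = (sin(πMτ)/(M sin(πτ)))⁴`, extended continuously
(by the value 1) at points where `sin(πτ) = 0`. -/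
noncomputable def squaredFejer (M : ℕ) (τ : ℝ) : ℝ :=
  if Real.sin (π * τ) = 0 then 1
  else (Real.sin (π * M * τ) / (M * Real.sin (π * τ))) ^ 4

open Finset Filter Topology

theorem iteratedDeriv_two_fun_pow_of_deriv_eq_zero {𝕜 : Type*} [NontriviallyNormedField 𝕜]
    {f : 𝕜 → 𝕜} (hf : ContDiff 𝕜 2 f) (n : ℕ) {x : 𝕜} (hx : deriv f x = 0) :
    iteratedDeriv 2 (fun y => f y ^ n) x = n * f x ^ (n - 1) * iteratedDeriv 2 f x := by
  have hdiff : Differentiable 𝕜 f := hf.differentiable (by norm_num)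
  have hderiv : DifferentiableAt 𝕜 (deriv f) x := by
    simpa only [iteratedDeriv_one] using hf.differentiable_iteratedDeriv' 1 x
  have hpow : deriv (fun y => f y ^ n) = fun y => n * f y ^ (n - 1) * deriv f y :=
    funext fun y => deriv_fun_pow (hdiff y) n
  rw [iteratedDeriv_succ, iteratedDeriv_one, hpow, iteratedDeriv_succ, iteratedDeriv_one]
  have hprod := (((hdiff x).fun_pow (n - 1)).const_mul (n : 𝕜)).hasDerivAt.fun_mul
    hderiv.hasDerivAt
  rw [hprod.deriv, hx, mul_zero, zero_add]

theorem iteratedDeriv_sum_cos {ι : Type*} (s : Finset ι) (ω : ι → ℝ) (n : ℕ) (τ : ℝ) :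
    iteratedDeriv n (fun τ => ∑ i ∈ s, cos (ω i * τ)) τ
      = ∑ i ∈ s, ω i ^ n * iteratedDeriv n cos (ω i * τ) := by
  rw [iteratedDeriv_fun_sum (f := fun i τ => cos (ω i * τ))
    fun i _ => (contDiff_cos.comp (contDiff_const.mul contDiff_id)).contDiffAt]
  exact sum_congr rfl fun i _ => congrFun (iteratedDeriv_comp_const_mul contDiff_cos (ω i)) τ

theorem sum_range_sq_two_mul_add (n : ℕ) (a : ℝ) :
    ∑ k ∈ range n, (2 * k + a) ^ 2
      = n * (2 * (n - 1) * (2 * n - 1) / 3 + 2 * a * (n - 1) + a ^ 2) := by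
  induction n with
  | zero => simp
  | succ n ih => rw [sum_range_succ, ih]; push_cast; ring

theorem sin_mul_sum_cos_two_mul_add_one_sub (M : ℕ) (x : ℝ) :
    sin x * ∑ k ∈ range M, cos ((2 * k + 1 - M) * x) = sin (M * x) := by
  have h := sin_mul_sum_cos M (2 * x) ((1 - M) * x)
  rw [show 2 * x / 2 = x by ring, show M * (2 * x) / 2 = M * x by ring,
    show (M - 1) * (2 * x) / 2 + (1 - M) * x = 0 by ring, cos_zero, mul_one] at h
  rw [← h]
  congr 1
  exact sum_congr rfl fun k _ => by ring_nf

noncomputable def normalizedDirichletKernel (M : ℕ) (τ : ℝ) : ℝ :=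
  (∑ k ∈ range M, cos ((2 * k + 1 - M) * π * τ)) / M

theorem squaredFejer_eq_of_sin_ne_zero (M : ℕ) {τ : ℝ} (h : sin (π * τ) ≠ 0) :
    squaredFejer M τ = normalizedDirichletKernel M τ ^ 4 := by
  have hsin : sin (π * M * τ) = sin (π * τ) * ∑ k ∈ range M, cos ((2 * k + 1 - M) * π * τ) := by
    simp_rw [mul_assoc _ π τ, sin_mul_sum_cos_two_mul_add_one_sub]
    ring_nf
  rw [squaredFejer, if_neg h, hsin, mul_comm (M : ℝ), mul_div_mul_left _ _ h,
    normalizedDirichletKernel]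

theorem normalizedDirichletKernel_zero {M : ℕ} (hM : M ≠ 0) :
    normalizedDirichletKernel M 0 = 1 := by
  simp [normalizedDirichletKernel, hM]

theorem squaredFejer_eventuallyEq_nhds_zero {M : ℕ} (hM : M ≠ 0) :
    squaredFejer M =ᶠ[𝓝 0] fun τ => normalizedDirichletKernel M τ ^ 4 := by
  filter_upwards [Ioo_mem_nhds (neg_lt_zero.mpr one_pos) one_pos] with τ hτ
  by_cases h : sin (π * τ) = 0
  · have hτ0 : τ = 0 := by
      have hlo : -π < π * τ := by nlinarith [pi_pos, hτ.1]
      have hhi : π * τ < π := by nlinarith [pi_pos, hτ.2]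
      simpa [pi_ne_zero] using (sin_eq_zero_iff_of_lt_of_lt hlo hhi).mp h
    simp [squaredFejer, hτ0, normalizedDirichletKernel_zero hM]
  · exact squaredFejer_eq_of_sin_ne_zero M h

theorem contDiff_normalizedDirichletKernel (M : ℕ) :
    ContDiff ℝ 2 (normalizedDirichletKernel M) := by
  unfold normalizedDirichletKernel
  fun_prop

theorem iteratedDeriv_normalizedDirichletKernel (M n : ℕ) (τ : ℝ) :
    iteratedDeriv n (normalizedDirichletKernel M) τ
      = (∑ k ∈ range M,
          ((2 * k + 1 - M) * π) ^ n * iteratedDeriv n cos ((2 * k + 1 - M) * π * τ)) / M := by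
  unfold normalizedDirichletKernel
  rw [iteratedDeriv_div_const, iteratedDeriv_sum_cos]

theorem deriv_normalizedDirichletKernel_zero (M : ℕ) :
    deriv (normalizedDirichletKernel M) 0 = 0 := by
  simp [← iteratedDeriv_one, iteratedDeriv_normalizedDirichletKernel]

theorem iteratedDeriv_two_normalizedDirichletKernel_zero {M : ℕ} (hM : M ≠ 0) :
    iteratedDeriv 2 (normalizedDirichletKernel M) 0 = -(π ^ 2 * ((M : ℝ) ^ 2 - 1) / 3) := by
  have hsum : ∑ k ∈ range M, ((2 * k + 1 - M) * π) ^ 2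
      = π ^ 2 * (M * ((M : ℝ) ^ 2 - 1) / 3) := by
    simp_rw [mul_pow, ← sum_mul, add_sub_assoc, sum_range_sq_two_mul_add]
    ring
  have hcos : iteratedDeriv 2 cos 0 = -1 := by simp
  simp only [iteratedDeriv_normalizedDirichletKernel, mul_zero, hcos, mul_neg_one,
    sum_neg_distrib, hsum]
  field_simp

/-- For `M ≥ 2`, the second derivative at `0` of the squared Fejér kernel is
`−4π²(M²−1)/3`. -/
theorem squaredFejer_second_deriv_at_zero (M : ℕ) (hM : 2 ≤ M) :
    iteratedDeriv 2 (squaredFejer M) 0 = -(4 * π ^ 2 * ((M : ℝ) ^ 2 - 1) / 3) := by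
  have hM0 : M ≠ 0 := by omega
  rw [(squaredFejer_eventuallyEq_nhds_zero hM0).iteratedDeriv_eq,
    iteratedDeriv_two_fun_pow_of_deriv_eq_zero (contDiff_normalizedDirichletKernel M) 4
      (deriv_normalizedDirichletKernel_zero M),
    normalizedDirichletKernel_zero hM0, iteratedDeriv_two_normalizedDirichletKernel_zero hM0]
  ring
end
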